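/- Let A ∈ ℝ^{m×n} preserve Chebyshev systems and v ∈ ℝⁿ be Chebyshev; set u = φ(A,v) and ṽ = ψ(A,u). If ‖A - u vᵀ‖_C = ‖A - u ṽᵀ‖_C, then T(A,u,ṽ) ⊆ T(A,u,v), and moreover j ∈ C(A,u,ṽ) if and only if j ∈ C(A,u,v) and vⱼ = ṽⱼ. -/

import Mathlib

open Filter

/-- A vector is Chebyshev if all of its components are non-zero. -/
def Cheb {n : ℕ} (v : Fin n → ℝ) : Prop := ∀ i, v i ≠ 0

/-- `mu a v` is the (unique, when `v` is Chebyshev) minimizer of `u ↦ ‖a - u • v‖`,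
where `‖·‖` is the sup-norm on `Fin n → ℝ`. -/
noncomputable def mu {n : ℕ} (a v : Fin n → ℝ) : ℝ :=
  Classical.epsilon fun t : ℝ => ∀ u : ℝ, ‖a - t • v‖ ≤ ‖a - u • v‖

noncomputable def phi {m n : ℕ} (A : Fin m → Fin n → ℝ) (v : Fin n → ℝ) : Fin m → ℝ :=
  fun i => mu (A i) v

noncomputable def psi {m n : ℕ} (A : Fin m → Fin n → ℝ) (u : Fin m → ℝ) : Fin n → ℝ :=
  fun j => mu (fun i => A i j) u

/-- `A` preserves Chebyshev systems. -/
def PreservesCheb {m n : ℕ} (A : Fin m → Fin n → ℝ) : Prop :=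
  (∀ v : Fin n → ℝ, Cheb v → Cheb (phi A v)) ∧ (∀ u : Fin m → ℝ, Cheb u → Cheb (psi A u))

/-- A vector is alternance-free if exactly one component attains the max absolute value. -/
def AlternanceFree {n : ℕ} (a : Fin n → ℝ) : Prop := ∃! i, |a i| = ‖a‖

/-- Chebyshev norm of the residual `A - u vᵀ`. -/
noncomputable def Cerr {m n : ℕ} (A : Fin m → Fin n → ℝ) (u : Fin m → ℝ) (v : Fin n → ℝ) : ℝ :=
  ⨆ i, ⨆ j, |A i j - u i * v j|

/-- Chebyshev norm of a matrix. -/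
noncomputable def CnormM {m n : ℕ} (A : Fin m → Fin n → ℝ) : ℝ :=
  ⨆ i, ⨆ j, |A i j|

/-- The sequence `v⁽ᵏ⁾` of the alternating minimization method started at `v0`. -/
noncomputable def vseq {m n : ℕ} (A : Fin m → Fin n → ℝ) (v0 : Fin n → ℝ) : ℕ → Fin n → ℝ
  | 0 => v0
  | k + 1 => psi A (phi A (vseq A v0 k))

/-- The set of positions where the residual attains its maximum absolute value. -/
noncomputable def TSet {m n : ℕ} (A : Fin m → Fin n → ℝ) (u : Fin m → ℝ) (v : Fin n → ℝ) :
    Set (Fin m × Fin n) :=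
  {p | |A p.1 p.2 - u p.1 * v p.2| = Cerr A u v}

/-- The set of columns containing a maximal-residual position. -/
noncomputable def CSet {m n : ℕ} (A : Fin m → Fin n → ℝ) (u : Fin m → ℝ) (v : Fin n → ℝ) :
    Set (Fin n) :=
  {j | ∃ i, (i, j) ∈ TSet A u v}

/-!
For every column `j`, the residual `A_{·j} - w_j u` has sup norm at most `‖A - u vᵀ‖_C`, and
`w_j = μ(A_{·j}, u)` minimises it. If `(i, j)` is extremal for `u wᵀ` and both residual norms
agree, the chain `E = |a_{ij} - u_i w_j| ≤ ‖A_{·j} - w_j u‖_∞ ≤ ‖A_{·j} - v_j u‖_∞ ≤ E` collapses, so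
`v_j` is a second minimiser. Minimisers are unique when `u` has no zero entry: the midpoint of two
minimisers is again one, and a coordinate where it attains the maximum forces the two residuals
to agree there.
-/

lemma exists_forall_norm_sub_smul_le {E : Type*} [NormedAddCommGroup E] [NormedSpace ℝ E]
    [FiniteDimensional ℝ E] (a v : E) : ∃ t : ℝ, ∀ s : ℝ, ‖a - t • v‖ ≤ ‖a - s • v‖ := by
  have hclosed : IsClosed ((ℝ ∙ v : Submodule ℝ E) : Set E) :=
    Submodule.closed_of_finiteDimensional _
  obtain ⟨y, hy, hdist⟩ := hclosed.exists_infDist_eq_dist ⟨0, Submodule.zero_mem _⟩ a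
  obtain ⟨t, rfl⟩ := Submodule.mem_span_singleton.mp hy
  refine ⟨t, fun s => ?_⟩
  rw [← dist_eq_norm, ← dist_eq_norm, ← hdist]
  exact Metric.infDist_le_dist_of_mem (Submodule.smul_mem _ s (Submodule.mem_span_singleton_self v))

lemma norm_sub_mu_smul_le {k : ℕ} (a v : Fin k → ℝ) (t : ℝ) : ‖a - mu a v • v‖ ≤ ‖a - t • v‖ :=
  Classical.epsilon_spec (exists_forall_norm_sub_smul_le a v) t

lemma eq_of_abs_le_of_abs_add_eq {p q N : ℝ} (hp : |p| ≤ N) (hq : |q| ≤ N) (hpq : |p + q| = 2 * N) :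
    p = q := by
  rcases abs_cases p with ⟨h1, h1'⟩ | ⟨h1, h1'⟩ <;>
    rcases abs_cases q with ⟨h2, h2'⟩ | ⟨h2, h2'⟩ <;>
      rcases abs_cases (p + q) with ⟨h3, h3'⟩ | ⟨h3, h3'⟩ <;> linarith

lemma eq_of_norm_sub_smul_eq_of_isMin {ι : Type*} [Fintype ι] [Nonempty ι] {a v : ι → ℝ}
    (hv : ∀ i, v i ≠ 0) {t t' : ℝ} (hmin : ∀ s : ℝ, ‖a - t • v‖ ≤ ‖a - s • v‖)
    (heq : ‖a - t' • v‖ = ‖a - t • v‖) : t' = t := by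
  set M := ‖a - t • v‖
  have hsum : ‖(a - t • v) + (a - t' • v)‖ = 2 * M := by
    refine le_antisymm ((norm_add_le _ _).trans (by rw [heq]; linarith)) ?_
    have hmid : (a - t • v) + (a - t' • v) = (2 : ℝ) • (a - ((t + t') / 2) • v) := by
      ext i; simp only [Pi.add_apply, Pi.sub_apply, Pi.smul_apply, smul_eq_mul]; ring
    rw [hmid, norm_smul, Real.norm_two]
    linarith [hmin ((t + t') / 2)]
  obtain ⟨i, hi⟩ := (IsGreatest.pi_norm ((a - t • v) + (a - t' • v))).1
  have hcoord : a i - t * v i = a i - t' * v i := by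
    refine eq_of_abs_le_of_abs_add_eq (N := M) ?_ ?_ ?_
    · simpa using norm_le_pi_norm (a - t • v) i
    · simpa [heq] using norm_le_pi_norm (a - t' • v) i
    · simpa [hsum] using hi
  exact (mul_right_cancel₀ (hv i) (by linarith : t * v i = t' * v i)).symm

section Residual

variable {m n : ℕ} (A : Fin m → Fin n → ℝ) (u : Fin m → ℝ) (x : Fin n → ℝ)

lemma Cerr_nonneg : 0 ≤ Cerr A u x :=
  Real.iSup_nonneg fun _ => Real.iSup_nonneg fun _ => abs_nonneg _

lemma abs_sub_mul_le_Cerr (i : Fin m) (j : Fin n) : |A i j - u i * x j| ≤ Cerr A u x :=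
  (le_ciSup (f := fun j' => |A i j' - u i * x j'|) (Set.finite_range _).bddAbove j).trans
    (le_ciSup (f := fun i' => ⨆ j', |A i' j' - u i' * x j'|) (Set.finite_range _).bddAbove i)

lemma abs_sub_mul_le_norm_column_sub_smul (i : Fin m) (j : Fin n) :
    |A i j - u i * x j| ≤ ‖(fun i' => A i' j) - x j • u‖ := by
  simpa [mul_comm] using norm_le_pi_norm ((fun i' => A i' j) - x j • u) i

lemma norm_column_sub_smul_le_Cerr (j : Fin n) : ‖(fun i => A i j) - x j • u‖ ≤ Cerr A u x :=
  (pi_norm_le_iff_of_nonneg (Cerr_nonneg A u x)).mpr fun i => by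
    simpa [mul_comm] using abs_sub_mul_le_Cerr A u x i j

end Residual

lemma mem_TSet_and_eq_psi_of_mem_TSet_psi {m n : ℕ} {A : Fin m → Fin n → ℝ} {u : Fin m → ℝ}
    {v : Fin n → ℝ} (hu : Cheb u) (h : Cerr A u v = Cerr A u (psi A u)) {p : Fin m × Fin n}
    (hp : p ∈ TSet A u (psi A u)) : p ∈ TSet A u v ∧ v p.2 = psi A u p.2 := by
  obtain ⟨i, j⟩ := p
  have : Nonempty (Fin m) := ⟨i⟩
  have hwmin := norm_sub_mu_smul_le (fun i' => A i' j) u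
  have hext : Cerr A u v = ‖(fun i' => A i' j) - psi A u j • u‖ := by
    refine le_antisymm ?_ ((hwmin (v j)).trans (norm_column_sub_smul_le_Cerr A u v j))
    rw [h, ← hp]
    exact abs_sub_mul_le_norm_column_sub_smul A u (psi A u) i j
  have hvw : v j = psi A u j :=
    eq_of_norm_sub_smul_eq_of_isMin hu hwmin
      (le_antisymm (hext ▸ norm_column_sub_smul_le_Cerr A u v j) (hwmin (v j)))
  refine ⟨?_, hvw⟩
  change |A i j - u i * v j| = Cerr A u v
  rw [hvw, h]
  exact hp

theorem stmt16_general {m n : ℕ} (A : Fin m → Fin n → ℝ)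
    (hA : PreservesCheb A) (v : Fin n → ℝ) (hv : Cheb v)
    (u : Fin m → ℝ) (hu : u = phi A v) (w : Fin n → ℝ) (hw : w = psi A u)
    (h : Cerr A u v = Cerr A u w) :
    TSet A u w ⊆ TSet A u v ∧
      ∀ j, j ∈ CSet A u w ↔ j ∈ CSet A u v ∧ v j = w j := by
  subst hw
  have key := fun p => mem_TSet_and_eq_psi_of_mem_TSet_psi (p := p) (hu ▸ hA.1 v hv) h
  refine ⟨fun p hp => (key p hp).1, fun j => ⟨?_, ?_⟩⟩
  · rintro ⟨i, hi⟩
    exact ⟨⟨i, (key _ hi).1⟩, (key _ hi).2⟩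
  · rintro ⟨⟨i, hi⟩, hvw⟩
    refine ⟨i, ?_⟩
    change |A i j - u i * psi A u j| = Cerr A u (psi A u)
    rw [← hvw, ← h]
    exact hi

theorem stmt16 {m n : ℕ} (hm : 2 ≤ m) (hn : 2 ≤ n) (A : Fin m → Fin n → ℝ)
    (hA : PreservesCheb A) (v : Fin n → ℝ) (hv : Cheb v)
    (u : Fin m → ℝ) (hu : u = phi A v) (w : Fin n → ℝ) (hw : w = psi A u)
    (h : Cerr A u v = Cerr A u w) :
    TSet A u w ⊆ TSet A u v ∧
      ∀ j, j ∈ CSet A u w ↔ j ∈ CSet A u v ∧ v j = w j :=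
  stmt16_general A hA v hv u hu w hw h
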